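/- In 𝔽₂₃, let A₃ = {(a,0,0,0,0) : a ∈ ℝ} ∪ {(t, t, −t²/2, t³/6, t³/3) : t > 0} (the exponential image of the set W₃ = ℝX₁ ∪ ℝ₊(X₁+X₂)), and let S₃ be the subsemigroup of (ℝ⁵, ∗) generated by A₃. Then the point (0,1,0,0,0) (which is exp(X₂)) belongs to the topological closure of S₃ but does not belong to S₃ itself; in particular, for every k ∈ ℕ the set of products of at most k elements of A₃ is a proper subset of S₃'s closure that misses (0,1,0,0,0). -/

import Mathlib

/-!
Put `J p = 2 p₁ p₃ - p₂²`. A polynomial identity gives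
`x₁ y₁ J(x ∗ y) = (x₁ + y₁)(y₁ J x + x₁ J y) + (x₁ y₂ - y₁ x₂ - x₀ x₁ y₁)²`, so the points with
`p₁ > 0` and `J p > 0`, together with the points with `p₁ = p₂ = p₃ = 0`, form a set closed
under `∗`. It contains `A₃` and hence `S₃`, but not `exp X₂`, for which `J = 0`.
On the other hand `exp(-tX₁) ∗ exp(t(X₁ + X₂)) ∈ S₃`, and its `n`-th power with `t = 1/n`
tends to `exp X₂` as `n → ∞`.
-/

/-- The group operation of the free Carnot group `𝔽₂₃` of rank 2 and step 3, in
exponential coordinates of the second kind on `ℝ⁵`. -/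
noncomputable def F23mul (x y : Fin 5 → ℝ) : Fin 5 → ℝ :=
  ![x 0 + y 0,
    x 1 + y 1,
    x 2 + y 2 - x 0 * y 1,
    x 3 + y 3 - x 0 * y 2 + x 0 ^ 2 * y 1 / 2,
    x 4 + y 4 + x 0 * x 1 * y 1 + x 0 * y 1 ^ 2 / 2 - x 1 * y 2]

/-- The smallest subset of `α` containing `A` and closed under `mul`
(the subsemigroup generated by `A`). -/
def genSemigroup {α : Type*} (mul : α → α → α) (A : Set α) : Set α :=
  ⋂₀ {S : Set α | A ⊆ S ∧ ∀ x ∈ S, ∀ y ∈ S, mul x y ∈ S}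

/-- The exponential image of the set `W₃ = ℝX₁ ∪ ℝ₊(X₁+X₂)`. -/
noncomputable def A3 : Set (Fin 5 → ℝ) :=
  {p | ∃ a : ℝ, p = ![a, 0, 0, 0, 0]} ∪
  {p | ∃ t : ℝ, 0 < t ∧ p = ![t, t, -(t ^ 2) / 2, t ^ 3 / 6, t ^ 3 / 3]}

section genSemigroup

variable {α : Type*} {mul : α → α → α} {A : Set α}

lemma subset_genSemigroup : A ⊆ genSemigroup mul A := fun _ hx _ hS => hS.1 hx

lemma mul_mem_genSemigroup {x y : α} (hx : x ∈ genSemigroup mul A)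
    (hy : y ∈ genSemigroup mul A) : mul x y ∈ genSemigroup mul A :=
  fun S hS => hS.2 x (hx S hS) y (hy S hS)

lemma genSemigroup_subset {S : Set α} (hAS : A ⊆ S)
    (hS : ∀ x ∈ S, ∀ y ∈ S, mul x y ∈ S) : genSemigroup mul A ⊆ S :=
  Set.sInter_subset_of_mem ⟨hAS, hS⟩

end genSemigroup

namespace F23

def J (p : Fin 5 → ℝ) : ℝ := 2 * p 1 * p 3 - p 2 ^ 2

lemma J_F23mul_weighted (x y : Fin 5 → ℝ) :
    x 1 * y 1 * J (F23mul x y) =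
      (x 1 + y 1) * (y 1 * J x + x 1 * J y) + (x 1 * y 2 - y 1 * x 2 - x 0 * x 1 * y 1) ^ 2 := by
  simp only [J, F23mul, Matrix.cons_val]
  ring

def horizontal : Set (Fin 5 → ℝ) := {p | p 1 = 0 ∧ p 2 = 0 ∧ p 3 = 0}

def positiveJ : Set (Fin 5 → ℝ) := {p | 0 < p 1 ∧ 0 < J p}

lemma F23mul_mem_horizontal {x y : Fin 5 → ℝ} (hx : x ∈ horizontal) (hy : y ∈ horizontal) :
    F23mul x y ∈ horizontal := by
  obtain ⟨hx1, hx2, hx3⟩ := hx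
  obtain ⟨hy1, hy2, hy3⟩ := hy
  simp [horizontal, F23mul, hx1, hx2, hx3, hy1, hy2, hy3]

lemma F23mul_mem_positiveJ_of_horizontal_left {x y : Fin 5 → ℝ} (hx : x ∈ horizontal)
    (hy : y ∈ positiveJ) : F23mul x y ∈ positiveJ := by
  obtain ⟨hx1, hx2, hx3⟩ := hx
  obtain ⟨hy1, hyJ⟩ := hy
  have hJ : J (F23mul x y) = J y := by
    simp only [J, F23mul, Matrix.cons_val, hx1, hx2, hx3]
    ring
  refine ⟨?_, hJ ▸ hyJ⟩
  simpa [F23mul, hx1] using hy1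

lemma F23mul_mem_positiveJ_of_horizontal_right {x y : Fin 5 → ℝ} (hx : x ∈ positiveJ)
    (hy : y ∈ horizontal) : F23mul x y ∈ positiveJ := by
  obtain ⟨hx1, hxJ⟩ := hx
  obtain ⟨hy1, hy2, hy3⟩ := hy
  have hJ : J (F23mul x y) = J x := by
    simp only [J, F23mul, Matrix.cons_val, hy1, hy2, hy3]
    ring
  refine ⟨?_, hJ ▸ hxJ⟩
  simpa [F23mul, hy1] using hx1

lemma F23mul_mem_positiveJ {x y : Fin 5 → ℝ} (hx : x ∈ positiveJ) (hy : y ∈ positiveJ) :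
    F23mul x y ∈ positiveJ := by
  obtain ⟨hx1, hxJ⟩ := hx
  obtain ⟨hy1, hyJ⟩ := hy
  have hweighted : 0 < x 1 * y 1 * J (F23mul x y) := by
    rw [J_F23mul_weighted]
    positivity
  exact ⟨show 0 < x 1 + y 1 by positivity, pos_of_mul_pos_right hweighted (by positivity)⟩

lemma A3_subset : A3 ⊆ horizontal ∪ positiveJ := by
  rintro p (⟨a, rfl⟩ | ⟨t, ht, rfl⟩)
  · left
    simp [horizontal]
  · right
    refine ⟨by simpa using ht, ?_⟩
    have hJ : J ![t, t, -(t ^ 2) / 2, t ^ 3 / 6, t ^ 3 / 3] = t ^ 4 / 12 := by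
      simp only [J, Matrix.cons_val]
      ring
    rw [hJ]
    positivity

lemma genSemigroup_A3_subset : genSemigroup F23mul A3 ⊆ horizontal ∪ positiveJ := by
  refine genSemigroup_subset A3_subset ?_
  rintro x (hx | hx) y (hy | hy)
  · exact Or.inl (F23mul_mem_horizontal hx hy)
  · exact Or.inr (F23mul_mem_positiveJ_of_horizontal_left hx hy)
  · exact Or.inr (F23mul_mem_positiveJ_of_horizontal_right hx hy)
  · exact Or.inr (F23mul_mem_positiveJ hx hy)

lemma expX2_not_mem : (![0, 1, 0, 0, 0] : Fin 5 → ℝ) ∉ horizontal ∪ positiveJ := by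
  rintro (⟨h1, -⟩ | ⟨-, hJ⟩)
  · simp at h1
  · simp [J] at hJ

/-- For `s ∈ ℕ` this is the `s`-th power of `exp(-tX₁) ∗ exp(t(X₁ + X₂))`. -/
noncomputable def gPow (s t : ℝ) : Fin 5 → ℝ :=
  ![0, s * t, s * t ^ 2 / 2, s * t ^ 3 / 6, -s * t ^ 3 / 6 - s * (s - 1) * t ^ 3 / 4]

lemma gPow_one (t : ℝ) :
    gPow 1 t = F23mul ![-t, 0, 0, 0, 0] ![t, t, -(t ^ 2) / 2, t ^ 3 / 6, t ^ 3 / 3] := by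
  funext i
  fin_cases i <;> simp [gPow, F23mul] <;> ring

lemma F23mul_gPow_one (s t : ℝ) : F23mul (gPow s t) (gPow 1 t) = gPow (s + 1) t := by
  funext i
  fin_cases i <;> simp [gPow, F23mul] <;> ring

lemma gPow_one_mem {t : ℝ} (ht : 0 < t) : gPow 1 t ∈ genSemigroup F23mul A3 := by
  rw [gPow_one]
  exact mul_mem_genSemigroup (subset_genSemigroup (Or.inl ⟨-t, rfl⟩))
    (subset_genSemigroup (Or.inr ⟨t, ht, rfl⟩))

lemma gPow_mem {t : ℝ} (ht : 0 < t) (n : ℕ) :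
    gPow (n + 1) t ∈ genSemigroup F23mul A3 := by
  induction n with
  | zero => simpa using gPow_one_mem ht
  | succ n ih =>
    push_cast
    rw [← F23mul_gPow_one]
    exact mul_mem_genSemigroup ih (gPow_one_mem ht)

noncomputable def gPowRecip (u : ℝ) : Fin 5 → ℝ :=
  ![0, 1, u / 2, u ^ 2 / 6, -u ^ 2 / 6 - (u - u ^ 2) / 4]

lemma gPow_inv_eq {u : ℝ} (hu : u ≠ 0) : gPow u⁻¹ u = gPowRecip u := by
  funext i
  fin_cases i <;> simp [gPow, gPowRecip] <;> field_simp

lemma continuous_gPowRecip : Continuous gPowRecip := by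
  unfold gPowRecip
  fun_prop

lemma gPowRecip_zero : gPowRecip 0 = ![0, 1, 0, 0, 0] := by
  simp [gPowRecip]

lemma expX2_mem_closure : (![0, 1, 0, 0, 0] : Fin 5 → ℝ) ∈ closure (genSemigroup F23mul A3) := by
  have hlim := (continuous_gPowRecip.tendsto 0).comp tendsto_one_div_add_atTop_nhds_zero_nat
  rw [gPowRecip_zero] at hlim
  refine mem_closure_of_tendsto hlim (Filter.Eventually.of_forall fun n => ?_)
  have hu : 1 / ((n : ℝ) + 1) ≠ 0 := by positivity
  rw [Function.comp_apply, ← gPow_inv_eq hu, one_div, inv_inv]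
  exact gPow_mem (by positivity) n

end F23

/-- In `𝔽₂₃`, the point `exp(X₂) = (0,1,0,0,0)` belongs to the topological closure of
the semigroup `S₃` generated by `exp(W₃)`, with `W₃ = ℝX₁ ∪ ℝ₊(X₁+X₂)`, but it does not
belong to `S₃` itself. -/
theorem F23_expX2_in_closure_not_in_semigroup :
    (![0, 1, 0, 0, 0] : Fin 5 → ℝ) ∈ closure (genSemigroup F23mul A3) ∧
    (![0, 1, 0, 0, 0] : Fin 5 → ℝ) ∉ genSemigroup F23mul A3 :=
  ⟨F23.expX2_mem_closure, fun h => F23.expX2_not_mem (F23.genSemigroup_A3_subset h)⟩
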